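/- arXiv:1501.02546 — 3 statements merged into one kernel-verified Lean document; each statement's English description precedes it below -/
import Mathlib

section
/- Let m be even and let A = D ×_1 B ⋯ ×_m B be a diagonalizable tensor with B invertible and D diagonal with diagonal entries d_i. Then for every x in R^n, A x^m = Σ_{i=1}^n d_i y_i^m where y = B^T x. Consequently, A is positive definite if and only if all d_i > 0. -/
open Finset Matrix

noncomputable def tmul {m n : ℕ} (A : (Fin m → Fin n) → ℝ) (x : Fin n → ℝ) : ℝ :=
  ∑ i : Fin m → Fin n, A i * ∏ k, x (i k)

noncomputable def tvec {m n : ℕ} (A : (Fin (m + 1) → Fin n) → ℝ) (x : Fin n → ℝ) :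
    Fin n → ℝ :=
  fun j => ∑ i : Fin m → Fin n, A (Fin.cons j i) * ∏ k, x (i k)

noncomputable def tmat {m n : ℕ} (A : (Fin (m + 2) → Fin n) → ℝ) (x : Fin n → ℝ) :
    Matrix (Fin n) (Fin n) ℝ :=
  Matrix.of fun j l => ∑ i : Fin m → Fin n, A (Fin.cons j (Fin.cons l i)) * ∏ k, x (i k)

def TSymm {m n : ℕ} (A : (Fin m → Fin n) → ℝ) : Prop :=
  ∀ σ : Equiv.Perm (Fin m), ∀ i : Fin m → Fin n, A (i ∘ σ) = A i

noncomputable def ttrans {m n : ℕ} (D : (Fin m → Fin n) → ℝ) (B : Matrix (Fin n) (Fin n) ℝ) :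
    (Fin m → Fin n) → ℝ :=
  fun j => ∑ i : Fin m → Fin n, D i * ∏ k, B (j k) (i k)

def TDiag {m n : ℕ} (D : (Fin m → Fin n) → ℝ) : Prop :=
  ∀ i : Fin m → Fin n, (∃ k l, i k ≠ i l) → D i = 0

theorem stmt3 {m n : ℕ} (hm : Even m) (hm2 : 2 ≤ m)
    (D : (Fin m → Fin n) → ℝ) (hD : TDiag D)
    (B : Matrix (Fin n) (Fin n) ℝ) (hB : B.det ≠ 0)
    (A : (Fin m → Fin n) → ℝ) (hA : A = ttrans D B) :
    (∀ x : Fin n → ℝ, tmul A x = ∑ j, D (fun _ => j) * (B.transpose.mulVec x j) ^ m) ∧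
    ((∀ x : Fin n → ℝ, x ≠ 0 → 0 < tmul A x) ↔ ∀ j, 0 < D (fun _ => j)) := by
  have hm0 : m ≠ 0 := by omega
  have hBt : IsUnit B.transpose.det := by
    rw [Matrix.det_transpose]; exact isUnit_iff_ne_zero.mpr hB
  have key : ∀ x : Fin n → ℝ,
      tmul A x = ∑ j, D (fun _ => j) * (B.transpose.mulVec x j) ^ m := by
    intro x
    subst hA
    unfold tmul ttrans
    simp only [Finset.sum_mul]
    rw [Finset.sum_comm]
    have h1 : ∀ jf : Fin m → Fin n,
        ∑ i : Fin m → Fin n, D jf * (∏ k, B (i k) (jf k)) * ∏ k, x (i k)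
        = D jf * ∏ k, B.transpose.mulVec x (jf k) := by
      intro jf
      have : ∀ i : Fin m → Fin n,
          D jf * (∏ k, B (i k) (jf k)) * ∏ k, x (i k)
          = D jf * ∏ k, (B (i k) (jf k) * x (i k)) := by
        intro i
        rw [mul_assoc, ← Finset.prod_mul_distrib]
      simp only [this]
      rw [← Finset.mul_sum]
      congr 1
      have := Finset.prod_univ_sum (fun _ : Fin m => (Finset.univ : Finset (Fin n)))
        (fun k s => B s (jf k) * x s)
      rw [Fintype.piFinset_univ] at this
      rw [← this]
      exact Finset.prod_congr rfl fun k _ => by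
        simp [Matrix.mulVec, dotProduct, Matrix.transpose_apply]
    simp only [h1]
    rw [← Finset.sum_subset
      (Finset.subset_univ ((Finset.univ : Finset (Fin n)).image (fun j => (fun _ => j : Fin m → Fin n))))]
    · rw [Finset.sum_image (by intro a _ b _ h; exact congrFun h ⟨0, by omega⟩)]
      exact Finset.sum_congr rfl fun j _ => by
        rw [Finset.prod_const, Finset.card_univ, Fintype.card_fin]
    · intro jf _ hjf
      have : ∃ k l, jf k ≠ jf l := by
        by_contra h
        push_neg at h
        exact hjf (Finset.mem_image.mpr ⟨jf ⟨0, by omega⟩, Finset.mem_univ _,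
          funext fun k => (h k ⟨0, by omega⟩).symm⟩)
      rw [hD jf this, zero_mul]
  refine ⟨key, ?_, ?_⟩
  · intro h j
    set e : Fin n → ℝ := Pi.single j 1 with he
    set x : Fin n → ℝ := B.transpose⁻¹.mulVec e with hx
    have hBe : B.transpose.mulVec x = e := by
      rw [hx, Matrix.mulVec_mulVec, Matrix.mul_nonsing_inv _ hBt, Matrix.one_mulVec]
    have hxne : x ≠ 0 := by
      intro h0
      have : e j = 0 := by rw [← hBe, h0, Matrix.mulVec_zero]; rfl
      simp [he] at this
    have := h x hxne
    rw [key x, hBe] at this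
    rw [Finset.sum_eq_single j
      (fun b _ hb => by simp [he, Pi.single_eq_of_ne hb, zero_pow hm0])
      (fun hj => absurd (Finset.mem_univ j) hj)] at this
    simpa [he] using this
  · intro h x hx
    rw [key x]
    set y := B.transpose.mulVec x with hy
    have hyne : y ≠ 0 := by
      intro h0
      apply hx
      have : B.transpose⁻¹.mulVec y = x := by
        rw [hy, Matrix.mulVec_mulVec, Matrix.nonsing_inv_mul _ hBt, Matrix.one_mulVec]
      rw [← this, h0, Matrix.mulVec_zero]
    obtain ⟨j, hj⟩ := Function.ne_iff.mp hyne
    refine Finset.sum_pos' (fun i _ => mul_nonneg (h i).le (hm.pow_nonneg _)) ⟨j, Finset.mem_univ j, ?_⟩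
    exact mul_pos (h j) (hm.pow_pos hj)
end

section
/- Let m be even, A a symmetric tensor of order m and dimension n, q a vector in R^n, and suppose the feasible set FEA(q,A) = {x ≥ 0 : A x^{m-1} + q ≥ 0} is nonempty. If x* is a KKT point of the nonlinear program min { A x^m + q^T x : A x^{m-1} + q ≥ 0, x ≥ 0 } with multiplier vector u* ≥ 0, i.e., q + m A x*^{m-1} - (m-1) (A x*^{m-2}) u* ≥ 0, x*^T (q + m A x*^{m-1} - (m-1)(A x*^{m-2}) u*) = 0, and u*^T (q + A x*^{m-1}) = 0, then for every index i in {1,...,n}: (m-1)(x* - u*)_i ((A x*^{m-2})(x* - u*))_i ≤ 0. -/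
open Finset Matrix

lemma tmat_mulVec_self {p n : ℕ} (A : (Fin (p + 2) → Fin n) → ℝ) (xs : Fin n → ℝ) :
    (tmat A xs).mulVec xs = tvec A xs := by
  funext j
  simp only [tmat, tvec, Matrix.mulVec, dotProduct, Matrix.of_apply]
  rw [← Fintype.sum_equiv (Fin.consEquiv (fun _ : Fin (p+1) => Fin n)) _
      (fun ci => A (Fin.cons j ci) * ∏ k, xs (ci k)) (fun _ => rfl)]
  rw [Fintype.sum_prod_type]
  refine Finset.sum_congr rfl fun l _ => ?_
  rw [Finset.sum_mul]
  refine Finset.sum_congr rfl fun i _ => ?_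
  simp only [Fin.consEquiv, Equiv.coe_fn_mk, Fin.prod_univ_succ, Fin.cons_zero, Fin.cons_succ]
  ring

theorem stmt4 {p n : ℕ} (hm : Even (p + 2))
    (A : (Fin (p + 2) → Fin n) → ℝ) (hsym : TSymm A) (q xs us : Fin n → ℝ)
    (hxs : ∀ i, 0 ≤ xs i) (hfeas : ∀ i, 0 ≤ tvec A xs i + q i)
    (hus : ∀ i, 0 ≤ us i)
    (h1 : ∀ i, 0 ≤ q i + ((p : ℝ) + 2) * tvec A xs i
        - ((p : ℝ) + 1) * (tmat A xs).mulVec us i)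
    (h2 : ∑ i, xs i * (q i + ((p : ℝ) + 2) * tvec A xs i
        - ((p : ℝ) + 1) * (tmat A xs).mulVec us i) = 0)
    (h3 : ∑ i, us i * (q i + tvec A xs i) = 0) :
    ∀ i, ((p : ℝ) + 1) * (xs i - us i) *
      (tmat A xs).mulVec (fun j => xs j - us j) i ≤ 0 := by
  intro i
  have hMx : (tmat A xs).mulVec xs = tvec A xs := tmat_mulVec_self A xs
  have hxw : ∀ j, xs j * (q j + ((p : ℝ) + 2) * tvec A xs j
      - ((p : ℝ) + 1) * (tmat A xs).mulVec us j) = 0 := by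
    intro j
    exact (Finset.sum_eq_zero_iff_of_nonneg
      (fun j _ => mul_nonneg (hxs j) (h1 j))).mp h2 j (Finset.mem_univ j)
  have hug : ∀ j, us j * (q j + tvec A xs j) = 0 := by
    intro j
    refine (Finset.sum_eq_zero_iff_of_nonneg
      (fun j _ => mul_nonneg (hus j) ?_)).mp h3 j (Finset.mem_univ j)
    have := hfeas j; linarith
  have hsub : (tmat A xs).mulVec (fun j => xs j - us j) i
      = tvec A xs i - (tmat A xs).mulVec us i := by
    have : (fun j => xs j - us j) = xs - us := rfl
    rw [this, Matrix.mulVec_sub, hMx]; rfl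
  have key : ((p : ℝ) + 1) * (xs i - us i) *
      (tmat A xs).mulVec (fun j => xs j - us j) i
      = - (xs i * (q i + tvec A xs i)
        + us i * (q i + ((p : ℝ) + 2) * tvec A xs i
          - ((p : ℝ) + 1) * (tmat A xs).mulVec us i)) := by
    rw [hsub]
    have e1 := hxw i
    have e2 := hug i
    nlinarith [e1, e2]
  rw [key]
  have n1 : 0 ≤ xs i * (q i + tvec A xs i) := by
    have := hfeas i; exact mul_nonneg (hxs i) (by linarith)
  have n2 : 0 ≤ us i * (q i + ((p : ℝ) + 2) * tvec A xs i
      - ((p : ℝ) + 1) * (tmat A xs).mulVec us i) :=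
    mul_nonneg (hus i) (h1 i)
  linarith
end

section
/- Let m be even and A a symmetric tensor of order m and dimension n such that A x^{m-2} is a positive definite matrix for every nonzero x in R^n. Suppose x* is nonzero and there exists u* ≥ 0 satisfying: q + m A x*^{m-1} - (m-1)(A x*^{m-2}) u* ≥ 0, x*^T(q + m A x*^{m-1} - (m-1)(A x*^{m-2}) u*) = 0, u*^T(q + A x*^{m-1}) = 0, x* ≥ 0, and A x*^{m-1} + q ≥ 0, and additionally (x* - u*)^T (A x*^{m-2})(x* - u*) ≤ 0. Then x* = u*, and x* solves the tensor complementarity problem NCP(q,A): x* ≥ 0, A x*^{m-1} + q ≥ 0, and x*^T(A x*^{m-1} + q) = 0. -/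
open Finset Matrix

lemma Matrix.PosDef.eq_zero_of_dotProduct_mulVec_nonpos {n R : Type*} [Fintype n] [Ring R]
    [PartialOrder R] [StarRing R] {M : Matrix n n R} (hM : M.PosDef) {x : n → R}
    (hx : star x ⬝ᵥ (M *ᵥ x) ≤ 0) : x = 0 := by
  by_contra hne
  exact (hM.dotProduct_mulVec_pos hne).not_ge hx

theorem stmt5_general {p n : ℕ}
    (A : (Fin (p + 2) → Fin n) → ℝ) (q xs us : Fin n → ℝ)
    (hpd : ∀ x : Fin n → ℝ, x ≠ 0 → (tmat A x).PosDef)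
    (hxne : xs ≠ 0)
    (hxs : ∀ i, 0 ≤ xs i) (hfeas : ∀ i, 0 ≤ tvec A xs i + q i)
    (h3 : ∑ i, us i * (q i + tvec A xs i) = 0)
    (h4 : ∑ i, (xs i - us i) * (tmat A xs).mulVec (fun j => xs j - us j) i ≤ 0) :
    xs = us ∧ (∀ i, 0 ≤ xs i) ∧ (∀ i, 0 ≤ tvec A xs i + q i) ∧
      ∑ i, xs i * (tvec A xs i + q i) = 0 := by
  have hxu : xs = us := sub_eq_zero.mp <|
    (hpd xs hxne).eq_zero_of_dotProduct_mulVec_nonpos (by rw [star_trivial]; exact h4)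
  subst hxu
  exact ⟨rfl, hxs, hfeas, by simpa only [add_comm] using h3⟩

theorem stmt5 {p n : ℕ} (hm : Even (p + 2))
    (A : (Fin (p + 2) → Fin n) → ℝ) (hsym : TSymm A) (q xs us : Fin n → ℝ)
    (hpd : ∀ x : Fin n → ℝ, x ≠ 0 → (tmat A x).PosDef)
    (hxne : xs ≠ 0)
    (hxs : ∀ i, 0 ≤ xs i) (hfeas : ∀ i, 0 ≤ tvec A xs i + q i)
    (hus : ∀ i, 0 ≤ us i)
    (h1 : ∀ i, 0 ≤ q i + ((p : ℝ) + 2) * tvec A xs i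
        - ((p : ℝ) + 1) * (tmat A xs).mulVec us i)
    (h2 : ∑ i, xs i * (q i + ((p : ℝ) + 2) * tvec A xs i
        - ((p : ℝ) + 1) * (tmat A xs).mulVec us i) = 0)
    (h3 : ∑ i, us i * (q i + tvec A xs i) = 0)
    (h4 : ∑ i, (xs i - us i) * (tmat A xs).mulVec (fun j => xs j - us j) i ≤ 0) :
    xs = us ∧ (∀ i, 0 ≤ xs i) ∧ (∀ i, 0 ≤ tvec A xs i + q i) ∧
      ∑ i, xs i * (tvec A xs i + q i) = 0 :=
  stmt5_general A q xs us hpd hxne hxs hfeas h3 h4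
end
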